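/- arXiv:2008.02767 — 8 statements merged into one kernel-verified Lean document; each statement's English description precedes it below -/
import Mathlib

section
/- Let V be a valuation ring and p ⊆ V a prime ideal. Then V is isomorphic to the fiber product (V/p) ×_{V_p/pV_p} V_p: the ring homomorphism V → (V/p) × V_p, v ↦ (v mod p, v/1), is injective, and its image is exactly the set of pairs (x, y) such that the image of x under the induced map V/p → V_p/(pV_p) equals the image of y under the quotient map V_p → V_p/(pV_p). Here pV_p denotes the ideal Ideal.map (algebraMap V (Localization.AtPrime p)) p. -/
/-!
If `s ∉ p` and `a ∈ p` in a valuation ring, then `a ∣ s` is impossible, so `s ∣ a` with quotient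
in `p`. Hence every fraction `a / s` of `pV_p` already lies in the image of `p`, and a pair
`(v mod p, y)` agreeing in `V_p/pV_p` is the image of `v - c`, where `c ∈ p` maps to `v - y`.
-/

theorem PreValuationRing.exists_mem_mul_eq_of_mem_of_notMem {V : Type*} [CommRing V]
    [PreValuationRing V] {p : Ideal V} [p.IsPrime] {a s : V} (ha : a ∈ p) (hs : s ∉ p) :
    ∃ c ∈ p, s * c = a := by
  obtain ⟨c, hc | hc⟩ := PreValuationRing.cond s a
  · exact ⟨c, (Ideal.IsPrime.mem_or_mem ‹_› (hc ▸ ha)).resolve_left hs, hc⟩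
  · exact absurd (hc ▸ p.mul_mem_right c ha) hs

theorem PreValuationRing.map_algebraMap_atPrime_subset_image {V : Type*} [CommRing V]
    [PreValuationRing V] (p : Ideal V) [p.IsPrime] :
    (p.map (algebraMap V (Localization.AtPrime p)) : Set (Localization.AtPrime p)) ⊆
      algebraMap V (Localization.AtPrime p) '' p := by
  intro z hz
  obtain ⟨⟨a, s⟩, h⟩ :=
    (IsLocalization.mem_map_algebraMap_iff p.primeCompl (Localization.AtPrime p)).1 hz
  obtain ⟨c, hcp, hc⟩ := PreValuationRing.exists_mem_mul_eq_of_mem_of_notMem a.2 s.2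
  refine ⟨c, hcp, (IsLocalization.map_units (Localization.AtPrime p) s).mul_left_cancel ?_⟩
  rw [← map_mul, hc, ← h, mul_comm]

theorem Ideal.range_quotientMk_prod_eq_of_map_subset_image {R A : Type*} [CommRing R] [CommRing A]
    (f : R →+* A) (p : Ideal R) (hp : (p.map f : Set A) ⊆ f '' p) :
    Set.range ((Ideal.Quotient.mk p).prod f) =
      {xy : (R ⧸ p) × A |
        Ideal.quotientMap (p.map f) f Ideal.le_comap_map xy.1 = Ideal.Quotient.mk (p.map f) xy.2} := by
  ext ⟨x, y⟩
  constructor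
  · rintro ⟨v, hv⟩
    simp only [RingHom.prod_apply, Prod.mk.injEq] at hv
    simp [← hv.1, ← hv.2, Ideal.quotientMap_mk]
  · intro h
    obtain ⟨v, rfl⟩ := Ideal.Quotient.mk_surjective x
    rw [Set.mem_ofPred_eq, Ideal.quotientMap_mk, Ideal.Quotient.eq] at h
    obtain ⟨c, hcp, hc⟩ := hp h
    refine ⟨v - c, ?_⟩
    simp [Ideal.Quotient.eq_zero_iff_mem.mpr hcp, hc]

/-- For a valuation ring `V` and a prime ideal `p ⊆ V`, the ring `V` is the fiber product
`(V/p) ×_{V_p/pV_p} V_p`: the map `V → (V/p) × V_p` is injective with image the pairs that agree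
in `V_p/(pV_p)`. -/
theorem stmt2 (V : Type*) [CommRing V] [IsDomain V] [ValuationRing V]
    (p : Ideal V) [p.IsPrime] :
    Function.Injective
      ((Ideal.Quotient.mk p).prod (algebraMap V (Localization.AtPrime p))) ∧
    Set.range ((Ideal.Quotient.mk p).prod (algebraMap V (Localization.AtPrime p))) =
      {xy : (V ⧸ p) × Localization.AtPrime p |
        Ideal.quotientMap (Ideal.map (algebraMap V (Localization.AtPrime p)) p)
            (algebraMap V (Localization.AtPrime p)) Ideal.le_comap_map xy.1 =
          Ideal.Quotient.mk (Ideal.map (algebraMap V (Localization.AtPrime p)) p) xy.2} := by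
  have hinj : Function.Injective (algebraMap V (Localization.AtPrime p)) :=
    IsLocalization.injective _ p.primeCompl_le_nonZeroDivisors
  exact ⟨fun a b hab ↦ hinj (congrArg Prod.snd hab),
    Ideal.range_quotientMk_prod_eq_of_map_subset_image _ p
      (PreValuationRing.map_algebraMap_atPrime_subset_image p)⟩
end

section
/- Let V be a valuation ring and p ⊆ V a prime ideal. Then the value group of V/p is isomorphic to (V_p)^×/V^×: there is a group isomorphism between the quotient of the unit group (Localization.AtPrime p)ˣ by the image of Vˣ (under the unit map induced by the localization homomorphism V → V_p) and the quotient of the unit group (FractionRing (V/p))ˣ by the image of (V/p)ˣ (under the unit map induced by the algebra map V/p → FractionRing (V/p)). -/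
/-!
Reduction modulo `p` sends `(V_p)ˣ` onto the units of the residue field `κ(p)` of `V_p`, which
is a fraction field of `V/p`; modulo `(V/p)ˣ` this is a surjection `(V_p)ˣ → κ(p)ˣ/(V/p)ˣ`.
Its kernel is the image of `Vˣ`: since `V` is a valuation ring, a unit `u` of `V_p` or its
inverse comes from some `c ∈ V`, and if the residue of `c` is a unit of `V/p` then `c` is a unit
of the local ring `V`.
-/

/-- For a fraction field `B` of a valuation ring `A` this is the value group of `A`. -/
abbrev UnitsQuot (A B : Type*) [CommRing A] [CommRing B] [Algebra A B] : Type _ :=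
  Bˣ ⧸ (Units.map (algebraMap A B).toMonoidHom).range

def UnitsQuot.congr {A B C : Type*} [CommRing A] [CommRing B] [CommRing C] [Algebra A B]
    [Algebra A C] (e : B ≃ₐ[A] C) : UnitsQuot A B ≃* UnitsQuot A C :=
  QuotientGroup.congr _ _ (Units.mapEquiv e.toMulEquiv) <| by
    rw [MonoidHom.map_range]
    congr 1
    ext
    simp

theorem PreValuationRing.exists_algebraMap_eq_or_mul_algebraMap_eq_one {V S : Type*}
    [CommRing V] [PreValuationRing V] [CommRing S] [Algebra V S] (M : Submonoid V)
    [IsLocalization M S] (x : S) :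
    ∃ c : V, algebraMap V S c = x ∨ x * algebraMap V S c = 1 := by
  obtain ⟨v, s, rfl⟩ := IsLocalization.exists_mk'_eq M x
  obtain ⟨c, hc | hc⟩ := PreValuationRing.cond v (s : V)
  · refine ⟨c, Or.inr ?_⟩
    rw [mul_comm, IsLocalization.mul_mk'_eq_mk'_of_mul, mul_comm, hc, IsLocalization.mk'_self'']
  · refine ⟨c, Or.inl ?_⟩
    rw [← hc, IsLocalization.mk'_mul_cancel_left]

namespace Ideal

variable {R : Type*} [CommRing R] (p : Ideal R) [p.IsPrime]

noncomputable def unitsResidue :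
    (Localization.AtPrime p)ˣ →* UnitsQuot (R ⧸ p) p.ResidueField :=
  (QuotientGroup.mk' _).comp (Units.map (IsLocalRing.residue (Localization.AtPrime p)).toMonoidHom)

theorem unitsResidue_surjective : Function.Surjective p.unitsResidue :=
  (QuotientGroup.mk'_surjective _).comp <|
    IsLocalRing.surjective_units_map_of_local_ringHom _ IsLocalRing.residue_surjective inferInstance

theorem residue_algebraMap_localization (r : R) :
    IsLocalRing.residue (Localization.AtPrime p) (algebraMap R _ r) =
      algebraMap (R ⧸ p) p.ResidueField (Ideal.Quotient.mk p r) := rfl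

theorem range_units_map_le_ker_unitsResidue :
    (Units.map (algebraMap R (Localization.AtPrime p)).toMonoidHom).range ≤
      p.unitsResidue.ker := by
  rintro _ ⟨w, rfl⟩
  refine (QuotientGroup.eq_one_iff _).mpr ⟨Units.map (Ideal.Quotient.mk p).toMonoidHom w, ?_⟩
  ext
  exact (p.residue_algebraMap_localization w).symm

theorem mem_range_units_map_of_unitsResidue_eq_one [IsLocalRing R]
    (w : (Localization.AtPrime p)ˣ) (c : R) (hc : algebraMap R _ c = (w : Localization.AtPrime p))
    (hw : p.unitsResidue w = 1) :
    w ∈ (Units.map (algebraMap R (Localization.AtPrime p)).toMonoidHom).range := by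
  obtain ⟨t, ht⟩ := (QuotientGroup.eq_one_iff _).mp hw
  have htc : (t : R ⧸ p) = Ideal.Quotient.mk p c := by
    apply Ideal.injective_algebraMap_quotient_residueField
    rw [← residue_algebraMap_localization, hc]
    exact congrArg Units.val ht
  have : IsLocalHom (Ideal.Quotient.mk p) := .of_surjective _ Ideal.Quotient.mk_surjective
  have hcu : IsUnit c := isUnit_of_map_unit (Ideal.Quotient.mk p) c (htc ▸ t.isUnit)
  exact ⟨hcu.unit, Units.ext hc⟩

end Ideal

namespace ValuationRing

variable {V : Type*} [CommRing V] [IsDomain V] [ValuationRing V] (p : Ideal V) [p.IsPrime]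

theorem ker_unitsResidue :
    p.unitsResidue.ker =
      (Units.map (algebraMap V (Localization.AtPrime p)).toMonoidHom).range := by
  refine le_antisymm (fun u hu ↦ ?_) p.range_units_map_le_ker_unitsResidue
  obtain ⟨c, hc | hc⟩ :=
    PreValuationRing.exists_algebraMap_eq_or_mul_algebraMap_eq_one p.primeCompl
      (u : Localization.AtPrime p)
  · exact p.mem_range_units_map_of_unitsResidue_eq_one u c hc hu
  · rw [← inv_mem_iff]
    exact p.mem_range_units_map_of_unitsResidue_eq_one u⁻¹ c
      (u.mul_eq_one_iff_inv_eq.mp hc).symm (inv_mem hu)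

noncomputable def unitsQuotLocalizationEquiv :
    UnitsQuot V (Localization.AtPrime p) ≃* UnitsQuot (V ⧸ p) p.ResidueField :=
  (QuotientGroup.quotientMulEquivOfEq (ker_unitsResidue p).symm).trans
    (QuotientGroup.quotientKerEquivOfSurjective _ p.unitsResidue_surjective)

end ValuationRing

/-- For a valuation ring `V` and a prime ideal `p ⊆ V`, the value group of `V/p`, namely
`κ(p)ˣ/(V/p)ˣ` where `κ(p) = FractionRing (V/p)`, is isomorphic to `(V_p)ˣ/Vˣ`. -/
theorem stmt3 (V : Type*) [CommRing V] [IsDomain V] [ValuationRing V]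
    (p : Ideal V) [p.IsPrime] :
    Nonempty
      (((Localization.AtPrime p)ˣ ⧸
          (Units.map (algebraMap V (Localization.AtPrime p)).toMonoidHom).range) ≃*
        ((FractionRing (V ⧸ p))ˣ ⧸
          (Units.map (algebraMap (V ⧸ p) (FractionRing (V ⧸ p))).toMonoidHom).range)) :=
  ⟨(ValuationRing.unitsQuotLocalizationEquiv p).trans
    (UnitsQuot.congr (FractionRing.algEquiv (V ⧸ p) p.ResidueField).symm)⟩
end

section
/- Let V be a valuation ring which is a Henselian local ring, and let p ⊆ V be a prime ideal. Then both the localization V_p = Localization.AtPrime p and the quotient V/p are Henselian local rings. -/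
/-!
In a Henselian local ring every polynomial `X ^ (n + 2) + X ^ (n + 1) + D`, with `D` of degree
`≤ n` and coefficients in the maximal ideal `𝔪`, has a unit root: it lifts the simple root `-1` of
the reduction `X ^ (n + 1) * (X + 1)`. Conversely, this special case implies the Henselian property:
after centring at the approximate root, `F 0 = c ∈ 𝔪` and `F' 0 = u` is a unit, and
`F (c u⁻¹ y) = c (1 + y + y² E y)` with `E` having coefficients in `𝔪`; the reflection of
`1 + y + y² E y` has the special shape, and a unit root `P` of it gives the root `c u⁻¹ P⁻¹` of `F`.

The special case only involves coefficients from `𝔪`, so it passes from `R` to any local ring `S`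
receiving a map `R → S` whose image contains the maximal ideal of `S`. Both `V ⧸ p` and, for a
valuation ring `V`, the localization `V_p` are of this kind: if `a ∈ p` and `s ∉ p`, then `s`
divides `a`, so `a / s` already lies in `V`.
-/

open Polynomial IsLocalRing

def HenselianAtNegOne (R : Type*) [CommRing R] [IsLocalRing R] : Prop :=
  ∀ (n : ℕ) (D : R[X]), D.natDegree ≤ n → (∀ k, D.coeff k ∈ maximalIdeal R) →
    ∃ r, IsUnit r ∧ (X ^ (n + 2) + X ^ (n + 1) + D).IsRoot r

theorem Polynomial.eval_eq_coeff_zero_add_coeff_one_mul_add {R : Type*} [CommRing R] (F : R[X])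
    (x : R) : F.eval x = F.coeff 0 + F.coeff 1 * x + x ^ 2 * F.divX.divX.eval x := by
  conv_lhs => rw [← X_mul_divX_add F, ← X_mul_divX_add F.divX]
  simp only [eval_add, eval_mul, eval_X, eval_C, coeff_divX, zero_add]
  ring

theorem HenselianLocalRing.henselianAtNegOne (R : Type*) [CommRing R] [HenselianLocalRing R] :
    HenselianAtNegOne R := by
  intro n D hD hDm
  have hG : (X ^ (n + 2) + X ^ (n + 1) + D).Monic := by
    rw [add_assoc]
    refine monic_X_pow_add ((degree_add_le _ _).trans_lt (max_lt ?_ ?_))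
    · rw [degree_X_pow]; exact_mod_cast Nat.lt_succ_self _
    · exact (degree_le_of_natDegree_le hD).trans_lt (by exact_mod_cast (by omega : n < n + 2))
  have hDres : D.map (residue R) = 0 := by
    ext k
    simpa using hDm k
  have hGres : (X ^ (n + 2) + X ^ (n + 1) + D).map (residue R) = X ^ (n + 2) + X ^ (n + 1) := by
    simp [hDres]
  have hres (g : R[X]) (x : R) : residue R (g.eval x) = (g.map (residue R)).eval (residue R x) := by
    rw [eval_map, eval₂_at_apply]
  obtain ⟨r, hr, hr1⟩ := HenselianLocalRing.is_henselian _ hG (-1)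
    (by rw [← residue_eq_zero_iff, hres, hGres]; simp [pow_succ])
    (by
      rw [← residue_ne_zero_iff_isUnit, hres, ← derivative_map, hGres]
      simp only [derivative_add, derivative_X_pow_succ, eval_add, eval_mul, eval_C, eval_pow,
        eval_X, map_neg, map_one]
      convert pow_ne_zero (n + 1) (neg_ne_zero.mpr (one_ne_zero' (ResidueField R))) using 1
      push_cast
      ring)
  refine ⟨r, ?_, hr⟩
  rw [← residue_eq_zero_iff, map_sub, sub_eq_zero] at hr1
  simp [← residue_ne_zero_iff_isUnit, hr1]

theorem HenselianAtNegOne.of_maximalIdeal_subset_range {R S : Type*} [CommRing R]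
    [IsLocalRing R] [CommRing S] [IsLocalRing S] (hR : HenselianAtNegOne R) (φ : R →+* S)
    (hφ : (maximalIdeal S : Set S) ⊆ Set.range φ) : HenselianAtNegOne S := by
  intro n D hD hDm
  obtain ⟨D', hD'map, hD'deg⟩ :=
    exists_natDegree_eq_of_mem_lifts ((lifts_iff_coeff_lifts D).mpr fun k => hφ (hDm k))
  have hD'm (k : ℕ) : D'.coeff k ∈ maximalIdeal R := fun hu =>
    (show φ (D'.coeff k) ∈ maximalIdeal S by rw [← coeff_map, hD'map]; exact hDm k) (hu.map φ)
  obtain ⟨r, hr, hroot⟩ := hR n D' (hD'deg ▸ hD) hD'm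
  exact ⟨φ r, hr.map φ, by simpa [hD'map] using hroot.map (f := φ)⟩

theorem HenselianAtNegOne.exists_isRoot_mem_maximalIdeal {S : Type*} [CommRing S] [IsLocalRing S]
    (hS : HenselianAtNegOne S) (F : S[X]) (h0 : F.coeff 0 ∈ maximalIdeal S)
    (h1 : IsUnit (F.coeff 1)) : ∃ t ∈ maximalIdeal S, F.IsRoot t := by
  obtain ⟨u, hu⟩ := h1
  set N := F.natDegree
  set c := F.coeff 0
  set a := c * ↑u⁻¹
  set E : S[X] := C (c * ↑u⁻¹ ^ 2) * F.divX.divX.comp (C a * X)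
  have hEdeg : E.natDegree ≤ N := calc
    E.natDegree ≤ (F.divX.divX.comp (C a * X)).natDegree := natDegree_C_mul_le _ _
    _ ≤ F.divX.divX.natDegree * (C a * X).natDegree := natDegree_comp_le
    _ ≤ N * 1 := Nat.mul_le_mul (natDegree_divX_le.trans natDegree_divX_le)
      ((natDegree_C_mul_le a X).trans natDegree_X_le)
    _ = N := mul_one _
  have hEm (k : ℕ) : (E.reflect N).coeff k ∈ maximalIdeal S := by
    rw [coeff_reflect, coeff_C_mul, mul_assoc]
    exact Ideal.mul_mem_right _ _ h0
  obtain ⟨_, ⟨P, rfl⟩, hP⟩ := hS N _ (natDegree_reflect_le.trans (max_le le_rfl hEdeg)) hEm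
  refine ⟨a * ↑P⁻¹, Ideal.mul_mem_right _ _ (Ideal.mul_mem_right _ _ h0), ?_⟩
  have hE : (E.reflect N).eval ↑P * ↑P⁻¹ ^ N = E.eval ↑P⁻¹ := by
    simpa using eval₂_reflect_mul_pow (RingHom.id S) (↑P⁻¹ : S) N E hEdeg
  have hEv : E.eval ↑P⁻¹ = c * ↑u⁻¹ ^ 2 * F.divX.divX.eval (a * ↑P⁻¹) := by
    simp [E, eval_comp]
  have hF := F.eval_eq_coeff_zero_add_coeff_one_mul_add (a * ↑P⁻¹)
  rw [← hu] at hF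
  have hP2 : (P : S) ^ (N + 2) * ↑P⁻¹ ^ (N + 2) = 1 := by rw [← mul_pow, Units.mul_inv, one_pow]
  have hP1 : (P : S) ^ (N + 1) * ↑P⁻¹ ^ (N + 1) = 1 := by rw [← mul_pow, Units.mul_inv, one_pow]
  simp only [IsRoot, eval_add, eval_pow, eval_X] at hP ⊢
  -- `F (a * P⁻¹) = c * P⁻¹ ^ (N + 2) * (P ^ (N + 2) + P ^ (N + 1) + (E.reflect N).eval P)`
  linear_combination hF + c * ↑P⁻¹ * u.mul_inv - c * ↑P⁻¹ ^ 2 * (hE + hEv)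
    + c * ↑P⁻¹ ^ (N + 2) * hP - c * hP2 - c * ↑P⁻¹ * hP1

theorem HenselianAtNegOne.henselianLocalRing {S : Type*} [CommRing S] [IsLocalRing S]
    (hS : HenselianAtNegOne S) : HenselianLocalRing S where
  is_henselian f _ a₀ h₁ h₂ := by
    obtain ⟨t, ht, hroot⟩ := hS.exists_isRoot_mem_maximalIdeal (taylor a₀ f)
      (by rwa [taylor_coeff_zero]) (by rwa [taylor_coeff_one])
    exact ⟨t + a₀, by rwa [IsRoot, ← taylor_eval], by rwa [add_sub_cancel_right]⟩

theorem HenselianLocalRing.of_maximalIdeal_subset_range {R S : Type*} [CommRing R]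
    [HenselianLocalRing R] [CommRing S] [IsLocalRing S] (φ : R →+* S)
    (hφ : (maximalIdeal S : Set S) ⊆ Set.range φ) : HenselianLocalRing S :=
  ((henselianAtNegOne R).of_maximalIdeal_subset_range φ hφ).henselianLocalRing

theorem HenselianLocalRing.of_surjective {R S : Type*} [CommRing R] [HenselianLocalRing R]
    [CommRing S] [Nontrivial S] (φ : R →+* S) (hφ : Function.Surjective φ) :
    HenselianLocalRing S :=
  letI := IsLocalRing.of_surjective' φ hφ
  of_maximalIdeal_subset_range φ (by simp [hφ.range_eq])

theorem ValuationRing.maximalIdeal_atPrime_subset_range {V : Type*} [CommRing V] [IsDomain V]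
    [ValuationRing V] (p : Ideal V) [p.IsPrime] :
    (maximalIdeal (Localization.AtPrime p) : Set (Localization.AtPrime p)) ⊆
      Set.range (algebraMap V (Localization.AtPrime p)) := by
  intro x hx
  obtain ⟨⟨a, s⟩, rfl⟩ := IsLocalization.mk'_surjective p.primeCompl x
  obtain ⟨c, hc | hc⟩ := ValuationRing.cond (s : V) a
  · exact ⟨c, hc ▸ (IsLocalization.mk'_mul_cancel_left _ _).symm⟩
  · refine absurd ((IsLocalization.AtPrime.isUnit_mk'_iff _ p a s).mpr fun ha => ?_) hx
    exact s.2 (hc ▸ p.mul_mem_right c ha)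

/-- For a Henselian valuation ring `V` and a prime ideal `p ⊆ V`, both the localization `V_p`
and the quotient `V/p` are Henselian local rings. -/
theorem stmt4 (V : Type*) [CommRing V] [IsDomain V] [ValuationRing V]
    [HenselianLocalRing V] (p : Ideal V) [p.IsPrime] :
    HenselianLocalRing (Localization.AtPrime p) ∧ HenselianLocalRing (V ⧸ p) :=
  ⟨.of_maximalIdeal_subset_range _ (ValuationRing.maximalIdeal_atPrime_subset_range p),
    .of_surjective _ Ideal.Quotient.mk_surjective⟩
end

section
/- Let V be a valuation ring with maximal ideal m_V and let a ∈ m_V be a nonzero element. Then the localization V[1/a] = Localization.Away a is a valuation ring, and the a-adic completion V̂ᵃ = AdicCompletion (Ideal.span {a}) V is a valuation ring. -/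
/-!
Fractions `r / s` and `t / u` in a localization compare through `r u` and `t s`, so localizations
of valuation rings are valuation rings.

For the `a`-adic completion, represent a nonzero element by a Cauchy sequence `f` and pick `N`
with `a ^ N ∤ f N`. In a valuation ring this makes `f N` a proper divisor of `a ^ N`, so for
`m ≥ N` the terms `f m ≡ f N` mod `a ^ N` all divide each other, and termwise quotients by them
lose at most a factor `a ^ N` of precision. Hence the element and the image of `f N` divide each
other in the completion, and divisibility between nonzero elements is inherited from `V`. The
product of two nonzero elements divides the image of some `v w` with `a ^ (N + M) ∤ v w`, which
is nonzero, so the completion is a domain.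
-/

namespace ValuationRing

variable {R : Type*} [CommRing R] {v w w' x y z : R}

theorem dvd_of_not_dvd_of_dvd_sub [PreValuationRing R] (hx : ¬ x ∣ v) (hv : v ∣ w')
    (hw : x ∣ w - w') : v ∣ w := by
  have hvx : v ∣ x := (dvd_total v x).resolve_right hx
  simpa using dvd_add (hvx.trans hw) hv

variable [IsDomain R] [ValuationRing R]

theorem dvd_of_mul_dvd_mul_of_not_dvd (hy : ¬ y ∣ v) (h : x * y ∣ v * z) : x ∣ z := by
  obtain ⟨b, rfl⟩ := (dvd_total v y).resolve_right hy
  have hv : v ≠ 0 := by rintro rfl; simp at hy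
  have : v * (x * b) ∣ v * z := by rwa [mul_left_comm]
  exact dvd_of_mul_right_dvd ((mul_dvd_mul_iff_left hv).mp this)

theorem not_mul_dvd_mul (hv : ¬ x ∣ v) (hw : ¬ y ∣ w) : ¬ x * y ∣ v * w := fun h =>
  hv (dvd_of_mul_dvd_mul_of_not_dvd hw (by rwa [mul_comm w]))

end ValuationRing

theorem IsLocalization.mk'_dvd_mk'_of_mul_dvd_mul {R : Type*} [CommRing R] {M : Submonoid R}
    (S : Type*) [CommRing S] [Algebra R S] [IsLocalization M S] {r t : R} {s u : M}
    (h : r * u ∣ t * s) : mk' S r s ∣ mk' S t u := by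
  obtain ⟨c, hc⟩ := h
  refine ⟨algebraMap R S c, ?_⟩
  rw [mul_comm, mul_mk'_eq_mk'_of_mul, mk'_eq_iff_eq]
  congr 1
  linear_combination hc

theorem IsLocalization.preValuationRing {R : Type*} [CommRing R] [PreValuationRing R]
    (M : Submonoid R) (S : Type*) [CommRing S] [Algebra R S] [IsLocalization M S] :
    PreValuationRing S := by
  refine PreValuationRing.iff_dvd_total.mpr ⟨fun x y => ?_⟩
  obtain ⟨r, s, rfl⟩ := exists_mk'_eq M x
  obtain ⟨t, u, rfl⟩ := exists_mk'_eq M y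
  exact (ValuationRing.dvd_total (r * u) (t * s)).imp (mk'_dvd_mk'_of_mul_dvd_mul S)
    (mk'_dvd_mk'_of_mul_dvd_mul S)

namespace AdicCompletion

theorem nontrivial_of_ne_top {R : Type*} [CommRing R] {I : Ideal R} (hI : I ≠ ⊤) :
    Nontrivial (AdicCompletion I R) :=
  haveI := Ideal.Quotient.nontrivial_iff.mpr hI
  (evalOneₐ_surjective I).nontrivial

section span_singleton

variable {R : Type*} [CommRing R] {a x y : R} {n : ℕ}

theorem smodEq_span_singleton_pow_iff :
    x ≡ y [SMOD (Ideal.span {a} ^ n • ⊤ : Submodule R R)] ↔ a ^ n ∣ x - y := by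
  rw [SModEq.sub_mem, smul_eq_mul, Ideal.mul_top, Ideal.span_singleton_pow,
    Ideal.mem_span_singleton]

theorem AdicCauchySequence.pow_dvd_sub (f : AdicCauchySequence (Ideal.span {a}) R) {m n : ℕ}
    (h : m ≤ n) : a ^ m ∣ f n - f m :=
  dvd_sub_comm.mp (smodEq_span_singleton_pow_iff.mp (f.property h))

theorem mkₐ_eq_zero_iff (f : AdicCauchySequence (Ideal.span {a}) R) :
    mkₐ (Ideal.span {a}) f = 0 ↔ ∀ n, a ^ n ∣ f n := by
  simp only [← Ideal.mem_span_singleton, ← Ideal.span_singleton_pow,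
    ← Ideal.Quotient.eq_zero_iff_mem]
  refine ⟨fun h n => ?_, fun h => ext_evalₐ fun n => ?_⟩
  · simpa using congrArg (evalₐ _ n) h
  · simpa using h n

theorem AdicCauchySequence.not_pow_dvd_of_le {f : AdicCauchySequence (Ideal.span {a}) R}
    {N m : ℕ} (hN : ¬ a ^ N ∣ f N) (hm : N ≤ m) : ¬ a ^ N ∣ f m := fun h =>
  hN ((dvd_sub_right h).mp (f.pow_dvd_sub hm))

theorem algebraMap_eq_zero_iff :
    algebraMap R (AdicCompletion (Ideal.span {a}) R) x = 0 ↔ ∀ n, a ^ n ∣ x := by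
  rw [← (mkₐ (Ideal.span {a})).commutes, mkₐ_eq_zero_iff]
  rfl

variable [IsDomain R] [ValuationRing R]

theorem mkₐ_dvd_mkₐ_of_dvd {f g : AdicCauchySequence (Ideal.span {a}) R} {N : ℕ}
    (hN : ¬ a ^ N ∣ f N) (hfg : f N ∣ g N) :
    mkₐ (Ideal.span {a}) f ∣ mkₐ (Ideal.span {a}) g := by
  have hf (n : ℕ) : ¬ a ^ N ∣ f (n + N) := f.not_pow_dvd_of_le hN (Nat.le_add_left N n)
  have hdvd (n : ℕ) : f (n + N) ∣ g (n + N) := by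
    have h₁ : f (n + N) ∣ f N := ValuationRing.dvd_of_not_dvd_of_dvd_sub (hf n) dvd_rfl
      (dvd_sub_comm.mp (f.pow_dvd_sub (Nat.le_add_left N n)))
    exact h₁.trans (ValuationRing.dvd_of_not_dvd_of_dvd_sub hN hfg
      (g.pow_dvd_sub (Nat.le_add_left N n)))
  choose c hc using hdvd
  have hc_cauchy (n : ℕ) : c n ≡ c (n + 1) [SMOD (Ideal.span {a} ^ n • ⊤ : Submodule R R)] := by
    rw [smodEq_span_singleton_pow_iff]
    -- `f (n + N)` properly divides `a ^ N`, so cancelling it costs at most `a ^ N`.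
    refine ValuationRing.dvd_of_mul_dvd_mul_of_not_dvd (hf n) ?_
    have hle : n + N ≤ n + 1 + N := by omega
    have : f (n + N) * (c n - c (n + 1)) =
        (f (n + 1 + N) - f (n + N)) * c (n + 1) - (g (n + 1 + N) - g (n + N)) := by
      linear_combination hc (n + 1) - hc n
    rw [this, ← pow_add]
    exact dvd_sub (dvd_mul_of_dvd_left (f.pow_dvd_sub hle) _) (g.pow_dvd_sub hle)
  refine ⟨mkₐ _ (AdicCauchySequence.mk _ _ c hc_cauchy), ?_⟩
  rw [← map_mul, eq_comm, ← sub_eq_zero, ← map_sub, mkₐ_eq_zero_iff]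
  intro n
  have hle : n ≤ n + N := Nat.le_add_right n N
  have : (f * AdicCauchySequence.mk _ _ c hc_cauchy - g) n =
      (g (n + N) - g n) - (f (n + N) - f n) * c n := by
    simp only [AdicCauchySequence.sub_apply, mul_apply, AdicCauchySequence.mk_coe]
    linear_combination -hc n
  rw [this]
  exact dvd_sub (g.pow_dvd_sub hle) (dvd_mul_of_dvd_left (f.pow_dvd_sub hle) _)

theorem exists_dvd_algebraMap_and_algebraMap_dvd {z : AdicCompletion (Ideal.span {a}) R}
    (hz : z ≠ 0) : ∃ (v : R) (N : ℕ), ¬ a ^ N ∣ v ∧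
      z ∣ algebraMap R _ v ∧ algebraMap R _ v ∣ z := by
  obtain ⟨f, rfl⟩ := mk_surjective _ _ z
  change mkₐ _ f ≠ 0 at hz
  obtain ⟨N, hN⟩ : ∃ N, ¬ a ^ N ∣ f N := by simpa [mkₐ_eq_zero_iff] using hz
  refine ⟨f N, N, hN, ?_, ?_⟩ <;> rw [← (mkₐ (Ideal.span {a})).commutes]
  · exact mkₐ_dvd_mkₐ_of_dvd hN dvd_rfl
  · exact mkₐ_dvd_mkₐ_of_dvd (f := algebraMap R _ (f N)) hN dvd_rfl

theorem preValuationRing_span_singleton :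
    PreValuationRing (AdicCompletion (Ideal.span {a}) R) := by
  refine PreValuationRing.iff_dvd_total.mpr ⟨fun x y => ?_⟩
  rcases eq_or_ne x 0 with rfl | hx
  · exact Or.inr (dvd_zero y)
  rcases eq_or_ne y 0 with rfl | hy
  · exact Or.inl (dvd_zero x)
  obtain ⟨v, -, -, hxv, hvx⟩ := exists_dvd_algebraMap_and_algebraMap_dvd hx
  obtain ⟨w, -, -, hyw, hwy⟩ := exists_dvd_algebraMap_and_algebraMap_dvd hy
  exact (ValuationRing.dvd_total v w).imp (fun h => hxv.trans ((map_dvd _ h).trans hwy))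
    (fun h => hyw.trans ((map_dvd _ h).trans hvx))

theorem isDomain_span_singleton (ha : ¬ IsUnit a) :
    IsDomain (AdicCompletion (Ideal.span {a}) R) := by
  have := nontrivial_of_ne_top (mt Ideal.span_singleton_eq_top.mp ha)
  refine @NoZeroDivisors.to_isDomain _ _ _ ⟨fun {x y} hxy => or_iff_not_imp_left.mpr fun hx => ?_⟩
  by_contra hy
  obtain ⟨v, N, hv, hxv, -⟩ := exists_dvd_algebraMap_and_algebraMap_dvd hx
  obtain ⟨w, M, hw, hyw, -⟩ := exists_dvd_algebraMap_and_algebraMap_dvd hy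
  have hvw : algebraMap R (AdicCompletion (Ideal.span {a}) R) (v * w) = 0 := by
    rw [map_mul, ← zero_dvd_iff, ← hxy]
    exact mul_dvd_mul hxv hyw
  exact ValuationRing.not_mul_dvd_mul hv hw (pow_add a N M ▸ algebraMap_eq_zero_iff.mp hvw _)

end span_singleton

end AdicCompletion

/-- For a valuation ring `V` and a nonzero `a` in the maximal ideal, the localization `V[1/a]`
and the `a`-adic completion `V̂ᵃ = AdicCompletion (Ideal.span {a}) V` are valuation rings
(in particular they are domains). -/
theorem stmt6 (V : Type*) [CommRing V] [IsDomain V] [ValuationRing V]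
    (a : V) (ha : a ≠ 0) (ham : a ∈ IsLocalRing.maximalIdeal V) :
    (∃ h : IsDomain (Localization.Away a),
      @ValuationRing (Localization.Away a) _ h) ∧
    (∃ h : IsDomain (AdicCompletion (Ideal.span {a}) V),
      @ValuationRing (AdicCompletion (Ideal.span {a}) V) _ h) := by
  have : IsDomain (Localization.Away a) :=
    IsLocalization.isDomain_localization (powers_le_nonZeroDivisors_of_noZeroDivisors ha)
  have : IsDomain (AdicCompletion (Ideal.span {a}) V) :=
    AdicCompletion.isDomain_span_singleton ham
  have := IsLocalization.preValuationRing (Submonoid.powers a) (Localization.Away a)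
  have := AdicCompletion.preValuationRing_span_singleton (a := a)
  exact ⟨⟨_, .mk⟩, ⟨_, .mk⟩⟩
end

section
/- Let V be a valuation ring with maximal ideal m_V, let a ∈ m_V be a nonzero element, and let q := ⋂_{n>0} (aⁿ) be the prime ideal which is the intersection of the ideals generated by powers of a. Then the localization V[1/a] = Localization.Away a coincides with the localization of V at the prime q: the algebra map V → Localization.Away a exhibits Localization.Away a as the localization of V at the complement of q (Mathlib: IsLocalization.AtPrime (Localization.Away a) q). -/
/-!
Write `q = ⋂ₙ (aⁿ⁺¹)`. Since `a` is a nonzero nonunit, `aᵏ ∉ (aᵏ⁺¹)`, so the powers of `a`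
avoid `q`. Conversely, if `x ∉ q` then `aⁿ⁺¹ ∤ x` for some `n`, and in a valuation ring this
forces `x ∣ aⁿ⁺¹`; so every element outside `q` divides a power of `a`, and inverting `a`
already inverts all of them.
-/

open Ideal

theorem mem_iInf_span_pow_succ_iff {R : Type*} [CommSemiring R] {a x : R} :
    x ∈ ⨅ n : ℕ, span {a ^ (n + 1)} ↔ ∀ n : ℕ, a ^ (n + 1) ∣ x := by
  simp only [mem_iInf, mem_span_singleton]

theorem powers_le_primeCompl_iInf_span_pow_succ {R : Type*} [CommRing R] [IsDomain R] {a : R}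
    (ha : a ≠ 0) (hu : ¬IsUnit a) [(⨅ n : ℕ, span {a ^ (n + 1)} : Ideal R).IsPrime] :
    Submonoid.powers a ≤ (⨅ n : ℕ, span {a ^ (n + 1)} : Ideal R).primeCompl := by
  rintro _ ⟨k, rfl⟩ hk
  have hdvd := mem_iInf_span_pow_succ_iff.mp hk k
  rw [pow_dvd_pow_iff ha hu] at hdvd
  omega

theorem ValuationRing.exists_dvd_pow_succ_of_notMem_iInf_span_pow_succ {V : Type*}
    [CommRing V] [IsDomain V] [ValuationRing V] {a x : V}
    (hx : x ∉ ⨅ n : ℕ, span {a ^ (n + 1)}) : ∃ n : ℕ, x ∣ a ^ (n + 1) := by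
  obtain ⟨n, hn⟩ := not_forall.mp (mt mem_iInf_span_pow_succ_iff.mpr hx)
  exact ⟨n, (ValuationRing.dvd_total x (a ^ (n + 1))).resolve_right hn⟩

/-- For a valuation ring `V` and a nonzero `a` in the maximal ideal, with
`q := ⋂_{n>0} (aⁿ)` (a prime ideal), the localization `V[1/a]` as a `V`-algebra is the
localization of `V` at the prime `q`. -/
theorem stmt7 (V : Type*) [CommRing V] [IsDomain V] [ValuationRing V]
    (a : V) (ha : a ≠ 0) (ham : a ∈ IsLocalRing.maximalIdeal V)
    (hq : (⨅ n : ℕ, (Ideal.span {a ^ (n + 1)} : Ideal V)).IsPrime) :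
    haveI := hq
    IsLocalization.AtPrime (Localization.Away a)
      (⨅ n : ℕ, (Ideal.span {a ^ (n + 1)} : Ideal V)) := by
  have hu : ¬IsUnit a := (IsLocalRing.mem_maximalIdeal a).mp ham
  refine IsLocalization.isLocalization_of_is_exists_mul_mem _ (Submonoid.powers a) _
    (powers_le_primeCompl_iInf_span_pow_succ ha hu) fun ⟨x, hx⟩ => ?_
  obtain ⟨n, m, hm⟩ := ValuationRing.exists_dvd_pow_succ_of_notMem_iInf_span_pow_succ hx
  exact ⟨m, n + 1, hm.trans (mul_comm x m)⟩
end

section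
/- Let V be a valuation ring with maximal ideal m_V, let a ∈ m_V be a nonzero element, and let C := AdicCompletion (Ideal.span {a}) V be the a-adic completion of V, with ā the image of a in C. Then the localization C[1/ā] = Localization.Away ā is a field, and the natural map C → C[1/ā] is injective; consequently C[1/ā] is the fraction field of C (i.e., IsFractionRing C (Localization.Away ā) holds). -/
/-!
Write `C` for the `a`-adic completion and `ā` for the image of `a`. Every nonzero `x ∈ C` divides
a power of `ā`: split off powers of `ā` until the residue of `x` modulo `a` is nonzero. If
`vₙ ∈ V` represent such an `x`, no `vₙ₊₁` is divisible by `a`, so `vₙ₊₁ ∣ a` in the valuation ring,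
and the elements `a · (a / vₙ₊₁)` form an `a`-adic Cauchy sequence whose limit `y` satisfies
`x y = ā²`. As `a` is a nonzero nonunit, `ā` is not nilpotent; hence `C` is a domain and inverting
`ā` inverts every nonzero element.
-/

section

variable {R : Type*} [CommRing R] {s : R}

theorem isDomain_of_forall_ne_zero_dvd_pow (hs : ¬IsNilpotent s)
    (h : ∀ x : R, x ≠ 0 → ∃ k, x ∣ s ^ k) : IsDomain R := by
  have : Nontrivial R := not_subsingleton_iff_nontrivial.1 fun _ => hs ⟨1, Subsingleton.elim _ _⟩
  refine @NoZeroDivisors.to_isDomain R _ _ ⟨fun {x y} hxy => ?_⟩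
  by_contra! hne
  obtain ⟨i, hi⟩ := h x hne.1
  obtain ⟨j, hj⟩ := h y hne.2
  have : x * y ∣ s ^ (i + j) := pow_add s i j ▸ mul_dvd_mul hi hj
  exact hs ⟨i + j, zero_dvd_iff.mp (hxy ▸ this)⟩

theorem isFractionRing_away_of_forall_ne_zero_dvd_pow [IsDomain R] (hs : s ≠ 0)
    (h : ∀ x : R, x ≠ 0 → ∃ k, x ∣ s ^ k) : IsFractionRing R (Localization.Away s) :=
  IsLocalization.of_le (Submonoid.powers s) _ (powers_le_nonZeroDivisors_of_noZeroDivisors hs)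
    fun x hx => by
      obtain ⟨k, hk⟩ := h x (nonZeroDivisors.ne_zero hx)
      exact isUnit_of_dvd_unit (map_dvd _ hk)
        (IsLocalization.map_units (M := Submonoid.powers s) _ ⟨s ^ k, k, rfl⟩)

end

namespace Ideal.Quotient

variable {R : Type*} [CommRing R] {a : R}

theorem mk_span_singleton_pow_eq_zero_iff {n : ℕ} {x : R} :
    mk (Ideal.span {a} ^ n) x = 0 ↔ a ^ n ∣ x := by
  rw [Ideal.span_singleton_pow, eq_zero_iff_dvd]

theorem mk_span_singleton_pow_eq_mk_iff {n : ℕ} {x y : R} :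
    mk (Ideal.span {a} ^ n) x = mk _ y ↔ a ^ n ∣ x - y := by
  rw [← sub_eq_zero, ← map_sub, mk_span_singleton_pow_eq_zero_iff]

end Ideal.Quotient

namespace AdicCompletion

open Ideal.Quotient (mk_span_singleton_pow_eq_zero_iff mk_span_singleton_pow_eq_mk_iff)

theorem evalₐ_zero {R : Type*} [CommRing R] {I : Ideal R} (x : AdicCompletion I R) :
    evalₐ I 0 x = 0 :=
  have : Subsingleton (R ⧸ I ^ 0) := Ideal.Quotient.subsingleton_iff.2 (by simp)
  Subsingleton.elim _ _

variable {V : Type*} [CommRing V] {a : V}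

local notation "𝒞" => AdicCompletion (Ideal.span (singleton a)) V
local notation "ā" => algebraMap V 𝒞 a

theorem isAdicCauchy_span_singleton_iff {f : ℕ → V} :
    IsAdicCauchy (Ideal.span {a}) V f ↔ ∀ {m n}, m ≤ n → a ^ m ∣ f n - f m := by
  simp only [IsAdicCauchy, SModEq.sub_mem, smul_eq_mul, Ideal.mul_top, Ideal.span_singleton_pow,
    Ideal.mem_span_singleton, dvd_sub_comm]

theorem exists_evalₐ_eq_of_pow_dvd_sub {f : ℕ → V} (hf : ∀ {m n}, m ≤ n → a ^ m ∣ f n - f m) :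
    ∃ y : 𝒞, ∀ n, evalₐ _ n y = Ideal.Quotient.mk _ (f n) :=
  ⟨mk _ _ ⟨f, isAdicCauchy_span_singleton_iff.2 hf⟩, fun n => evalₐ_mk _ n _⟩

theorem exists_pow_dvd_sub_and_evalₐ_eq (x : 𝒞) :
    ∃ f : ℕ → V, (∀ {m n}, m ≤ n → a ^ m ∣ f n - f m) ∧
      ∀ {m n}, m ≤ n → evalₐ _ m x = Ideal.Quotient.mk _ (f n) := by
  obtain ⟨f, rfl⟩ := mk_surjective _ _ x
  have hf : ∀ {m n : ℕ}, m ≤ n → a ^ m ∣ f.val n - f.val m := isAdicCauchy_span_singleton_iff.1 f.2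
  refine ⟨f.val, hf, fun {m n} hmn => ?_⟩
  rw [evalₐ_mk, mk_span_singleton_pow_eq_mk_iff, dvd_sub_comm]
  exact hf hmn

theorem evalₐ_succ_algebraMap_mul_eq_zero {y : 𝒞} {n : ℕ} (hy : evalₐ _ n y = 0) :
    evalₐ _ (n + 1) (ā * y) = 0 := by
  obtain ⟨g, -, hg⟩ := exists_pow_dvd_sub_and_evalₐ_eq y
  rw [hg n.le_succ, mk_span_singleton_pow_eq_zero_iff] at hy
  rw [map_mul, hg le_rfl, AlgHom.commutes, Ideal.Quotient.algebraMap_eq, ← map_mul,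
    mk_span_singleton_pow_eq_zero_iff, pow_succ']
  exact mul_dvd_mul_left a hy

theorem dvd_algebraMap_sq_of_evalₐ_one_ne_zero [PreValuationRing V] {x : 𝒞}
    (hx : evalₐ _ 1 x ≠ 0) : x ∣ ā ^ 2 := by
  obtain ⟨v, hv, hvx⟩ := exists_pow_dvd_sub_and_evalₐ_eq x
  rw [hvx le_rfl, Ne, mk_span_singleton_pow_eq_zero_iff, pow_one] at hx
  have hdvd (n : ℕ) : v (n + 1) ∣ a := by
    refine (ValuationRing.dvd_total _ _).resolve_right fun h => hx ?_
    have := hv (Nat.le_add_left 1 n)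
    rw [pow_one] at this
    simpa using h.sub this
  choose t ht using hdvd
  obtain ⟨y, hy⟩ : ∃ y : 𝒞, ∀ n, evalₐ _ n y = Ideal.Quotient.mk _ (a * t n) := by
    refine exists_evalₐ_eq_of_pow_dvd_sub fun {m n} hmn => ?_
    have hsub : a * t n - a * t m = t m * t n * -(v (n + 1) - v (m + 1)) := by
      linear_combination t n * ht m - t m * ht n
    rw [hsub]
    exact ((pow_dvd_pow a m.le_succ).trans (hv (Nat.succ_le_succ hmn))).neg_right.mul_left _
  refine ⟨y, ext_evalₐ fun n => ?_⟩
  rw [map_mul, hvx n.le_succ, hy, ← map_mul, map_pow, AlgHom.commutes,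
    Ideal.Quotient.algebraMap_eq, ← map_pow]
  congr 1
  linear_combination a * ht n

section Domain

variable [IsDomain V]

theorem algebraMap_dvd_of_evalₐ_one_eq_zero (ha : a ≠ 0) {x : 𝒞} (hx : evalₐ _ 1 x = 0) :
    ā ∣ x := by
  obtain ⟨f, hf, hfx⟩ := exists_pow_dvd_sub_and_evalₐ_eq x
  rw [hfx le_rfl, mk_span_singleton_pow_eq_zero_iff, pow_one] at hx
  have hdvd (n : ℕ) : a ∣ f (n + 1) := by
    have := hf (Nat.le_add_left 1 n)
    rw [pow_one] at this
    simpa using this.add hx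
  choose σ hσ using hdvd
  obtain ⟨y, hy⟩ : ∃ y : 𝒞, ∀ n, evalₐ _ n y = Ideal.Quotient.mk _ (σ n) := by
    refine exists_evalₐ_eq_of_pow_dvd_sub fun {m n} hmn => ?_
    have := hf (Nat.succ_le_succ hmn)
    rwa [hσ, hσ, ← mul_sub, pow_succ', mul_dvd_mul_iff_left ha] at this
  refine ⟨y, ext_evalₐ fun n => ?_⟩
  rw [hfx n.le_succ, map_mul, hy, AlgHom.commutes, Ideal.Quotient.algebraMap_eq, ← map_mul, hσ]

theorem exists_eq_algebraMap_pow_mul (ha : a ≠ 0) {x : 𝒞} {n : ℕ} (hx : evalₐ _ n x ≠ 0) :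
    ∃ k y, x = ā ^ k * y ∧ evalₐ _ 1 y ≠ 0 := by
  induction n generalizing x with
  | zero => exact absurd (evalₐ_zero x) hx
  | succ n ih =>
    by_cases h1 : evalₐ _ 1 x = 0
    · obtain ⟨y, rfl⟩ := algebraMap_dvd_of_evalₐ_one_eq_zero ha h1
      obtain ⟨k, z, rfl, hz⟩ := ih fun hy => hx (evalₐ_succ_algebraMap_mul_eq_zero hy)
      exact ⟨k + 1, z, by ring, hz⟩
    · exact ⟨0, x, by simp, h1⟩

theorem not_isNilpotent_algebraMap (ha : a ≠ 0) (hu : ¬IsUnit a) : ¬IsNilpotent ā := by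
  rintro ⟨k, hk⟩
  have : evalₐ _ (k + 1) (ā ^ k) = 0 := by rw [hk, _root_.map_zero]
  rw [← map_pow, AlgHom.commutes, Ideal.Quotient.algebraMap_eq,
    mk_span_singleton_pow_eq_zero_iff, pow_dvd_pow_iff ha hu] at this
  omega

theorem exists_dvd_algebraMap_pow [ValuationRing V] (ha : a ≠ 0) {x : 𝒞} (hx : x ≠ 0) :
    ∃ k, x ∣ ā ^ k := by
  obtain ⟨n, hn⟩ : ∃ n, evalₐ _ n x ≠ 0 := by
    by_contra! h
    exact hx (ext_evalₐ fun n => by rw [h n, _root_.map_zero])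
  obtain ⟨k, y, rfl, hy⟩ := exists_eq_algebraMap_pow_mul ha hn
  exact ⟨k + 2, pow_add ā k 2 ▸ mul_dvd_mul_left _ (dvd_algebraMap_sq_of_evalₐ_one_ne_zero hy)⟩

end Domain

end AdicCompletion

/-- For a valuation ring `V`, a nonzero `a` in the maximal ideal, and the `a`-adic completion
`C := AdicCompletion (Ideal.span {a}) V` with `ā` the image of `a` in `C`: the localization
`C[1/ā]` is a field, the map `C → C[1/ā]` is injective, and `C[1/ā]` is the fraction field
of `C`. -/
theorem stmt8 (V : Type*) [CommRing V] [IsDomain V] [ValuationRing V]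
    (a : V) (ha : a ≠ 0) (ham : a ∈ IsLocalRing.maximalIdeal V) :
    IsField (Localization.Away
        (algebraMap V (AdicCompletion (Ideal.span {a}) V) a)) ∧
    Function.Injective (algebraMap (AdicCompletion (Ideal.span {a}) V)
        (Localization.Away (algebraMap V (AdicCompletion (Ideal.span {a}) V) a))) ∧
    IsFractionRing (AdicCompletion (Ideal.span {a}) V)
        (Localization.Away (algebraMap V (AdicCompletion (Ideal.span {a}) V) a)) := by
  have hnil := AdicCompletion.not_isNilpotent_algebraMap ha ((IsLocalRing.mem_maximalIdeal a).1 ham)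
  have hdvd := fun x => AdicCompletion.exists_dvd_algebraMap_pow ha (x := x)
  have := isDomain_of_forall_ne_zero_dvd_pow hnil hdvd
  have hfr := isFractionRing_away_of_forall_ne_zero_dvd_pow (h := hdvd)
    fun h => hnil (by rw [h]; exact IsNilpotent.zero)
  exact ⟨(IsFractionRing.toField (AdicCompletion (Ideal.span {a}) V)).toIsField,
    IsFractionRing.injective _ _, hfr⟩
end

section
/- Let V be a valuation ring with maximal ideal m_V, let a ∈ m_V be a nonzero element, let C := AdicCompletion (Ideal.span {a}) V be the a-adic completion of V with ā the image of a in C, and let L := Localization.Away ā be the localization of C away from ā. Then V is isomorphic to the fiber product V[1/a] ×_L C: the ring homomorphism V → (Localization.Away a) × C, given componentwise by the localization map and the completion map, is injective, and its image is exactly the set of pairs (x, y) such that the image of x under the induced map Localization.Away a → L (the localization away-map of V → C) equals the image of y under the localization map C → L. -/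
/-!
Since `a` is regular, so is its image `ā` in the completion `C` (read off on each `V/aⁿ⁺¹`), so
`C → C[1/ā]` is injective; and since `C/āⁿ = V/aⁿ`, divisibility by `aⁿ` in `V` can be tested
in `C`. If `x = v/aⁿ ∈ V[1/a]` and `y ∈ C` agree in `C[1/ā]`, the first fact gives `v = āⁿ y` in
`C`, the second `v = aⁿ w` in `V`, and then `w` maps to `x` and to `y`.
-/

open scoped nonZeroDivisors

namespace AdicCompletion

variable {R : Type*} [CommRing R] {a : R}

theorem pow_dvd_of_algebraMap_eq_pow_mul {v : R} {n : ℕ} {y : AdicCompletion (Ideal.span {a}) R}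
    (h : algebraMap R _ v = algebraMap R _ a ^ n * y) : a ^ n ∣ v := by
  have h' := congrArg (evalₐ (Ideal.span {a}) n) h
  have han : Ideal.Quotient.mk (Ideal.span {a} ^ n) (a ^ n) = 0 :=
    Ideal.Quotient.eq_zero_iff_mem.mpr (Ideal.pow_mem_pow (Ideal.mem_span_singleton_self a) n)
  rwa [AlgHom.commutes, map_mul, map_pow, AlgHom.commutes, ← map_pow, Ideal.Quotient.algebraMap_eq,
    han, zero_mul, Ideal.Quotient.eq_zero_iff_mem, Ideal.span_singleton_pow,
    Ideal.mem_span_singleton] at h'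

theorem algebraMap_mem_nonZeroDivisors (ha : a ∈ R⁰) :
    algebraMap R (AdicCompletion (Ideal.span {a}) R) a ∈ (AdicCompletion (Ideal.span {a}) R)⁰ := by
  rw [mem_nonZeroDivisors_iff_right]
  intro y hy
  obtain ⟨f, rfl⟩ := mk_surjective (Ideal.span {a}) R y
  refine ext_evalₐ fun n ↦ ?_
  have hdvd : a ^ n ∣ f.val (n + 1) := by
    have := congrArg (evalₐ (Ideal.span {a}) (n + 1)) hy
    rwa [map_mul, AlgHom.commutes, _root_.map_zero, evalₐ_mk, Ideal.Quotient.algebraMap_eq,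
      ← map_mul, Ideal.Quotient.eq_zero_iff_mem, Ideal.span_singleton_pow,
      Ideal.mem_span_singleton, pow_succ, dvd_cancel_right_mem_nonZeroDivisors ha] at this
  rwa [evalₐ_mk, ← Ideal.mk_eq_mk _ n.le_succ, _root_.map_zero, Ideal.Quotient.eq_zero_iff_mem,
    Ideal.span_singleton_pow, Ideal.mem_span_singleton]

end AdicCompletion

namespace Localization

variable {R S : Type*} [CommRing R] [CommRing S] (f : R →+* S) {a : R}

theorem awayMap_algebraMap (r : R) :
    awayMap f a (algebraMap R _ r) = algebraMap S (Away (f a)) (f r) :=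
  IsLocalization.map_eq _ r

theorem exists_eq_of_awayMap_eq (hfa : f a ∈ S⁰)
    (hdvd : ∀ (v : R) (n : ℕ) (y : S), f v = f a ^ n * y → a ^ n ∣ v)
    {x : Away a} {y : S} (h : awayMap f a x = algebraMap S (Away (f a)) y) :
    ∃ v, algebraMap R _ v = x ∧ f v = y := by
  obtain ⟨n, v, hx⟩ := IsLocalization.Away.surj a x
  have hy : f v = f a ^ n * y := by
    refine IsLocalization.injective (M := Submonoid.powers (f a)) (Away (f a))
      (Submonoid.powers_le.mpr hfa) ?_
    rw [← awayMap_algebraMap, ← hx, map_mul, h, map_pow, awayMap_algebraMap, map_mul, map_pow,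
      mul_comm]
  obtain ⟨w, rfl⟩ := hdvd v n y hy
  refine ⟨w, ?_, ?_⟩
  · refine ((IsLocalization.Away.algebraMap_isUnit a).pow n).mul_left_cancel ?_
    rw [mul_comm _ x, hx, map_mul, map_pow]
  · rwa [map_mul, map_pow, mul_cancel_left_mem_nonZeroDivisors (pow_mem hfa n)] at hy

theorem range_prod_eq_setOf_awayMap_eq (hfa : f a ∈ S⁰)
    (hdvd : ∀ (v : R) (n : ℕ) (y : S), f v = f a ^ n * y → a ^ n ∣ v) :
    Set.range ((algebraMap R (Away a)).prod f) =
      {xy : Away a × S | awayMap f a xy.1 = algebraMap S (Away (f a)) xy.2} := by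
  ext ⟨x, y⟩
  constructor
  · rintro ⟨v, hv⟩
    obtain ⟨rfl, rfl⟩ := Prod.mk.inj hv
    exact awayMap_algebraMap f v
  · intro h
    obtain ⟨v, hx, hy⟩ := exists_eq_of_awayMap_eq f hfa hdvd h
    exact ⟨v, Prod.ext hx hy⟩

end Localization

theorem stmt9_general (V : Type*) [CommRing V] [IsDomain V]
    (a : V) (ha : a ≠ 0) :
    Function.Injective
      ((algebraMap V (Localization.Away a)).prod
        (algebraMap V (AdicCompletion (Ideal.span {a}) V))) ∧
    Set.range ((algebraMap V (Localization.Away a)).prod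
        (algebraMap V (AdicCompletion (Ideal.span {a}) V))) =
      {xy : Localization.Away a × AdicCompletion (Ideal.span {a}) V |
        Localization.awayMap (algebraMap V (AdicCompletion (Ideal.span {a}) V)) a xy.1 =
          algebraMap (AdicCompletion (Ideal.span {a}) V)
            (Localization.Away
              (algebraMap V (AdicCompletion (Ideal.span {a}) V) a)) xy.2} := by
  have hloc : Function.Injective (algebraMap V (Localization.Away a)) :=
    IsLocalization.injective _ (powers_le_nonZeroDivisors_of_noZeroDivisors ha)
  exact ⟨fun v w h ↦ hloc (congrArg Prod.fst h),
    Localization.range_prod_eq_setOf_awayMap_eq _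
      (AdicCompletion.algebraMap_mem_nonZeroDivisors (mem_nonZeroDivisors_of_ne_zero ha))
      fun _ _ _ ↦ AdicCompletion.pow_dvd_of_algebraMap_eq_pow_mul⟩

/-- For a valuation ring `V`, a nonzero `a` in the maximal ideal, the `a`-adic completion
`C := AdicCompletion (Ideal.span {a}) V` with `ā` the image of `a`, and `L := C[1/ā]`:
`V` is the fiber product `V[1/a] ×_L C`, i.e. the map `V → V[1/a] × C` is injective with image
the pairs agreeing in `L`. -/
theorem stmt9 (V : Type*) [CommRing V] [IsDomain V] [ValuationRing V]
    (a : V) (ha : a ≠ 0) (ham : a ∈ IsLocalRing.maximalIdeal V) :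
    Function.Injective
      ((algebraMap V (Localization.Away a)).prod
        (algebraMap V (AdicCompletion (Ideal.span {a}) V))) ∧
    Set.range ((algebraMap V (Localization.Away a)).prod
        (algebraMap V (AdicCompletion (Ideal.span {a}) V))) =
      {xy : Localization.Away a × AdicCompletion (Ideal.span {a}) V |
        Localization.awayMap (algebraMap V (AdicCompletion (Ideal.span {a}) V)) a xy.1 =
          algebraMap (AdicCompletion (Ideal.span {a}) V)
            (Localization.Away
              (algebraMap V (AdicCompletion (Ideal.span {a}) V) a)) xy.2} :=
  stmt9_general V a ha
end

section
/- Let V be a valuation ring with maximal ideal m_V, let a ∈ m_V be a nonzero element, let C := AdicCompletion (Ideal.span {a}) V be the a-adic completion with ā the image of a in C, and let L := Localization.Away ā (which is the fraction field of C). Then for every natural number n, the group GL_n(L) is the product of the image of GL_n(V[1/a]) and the image of GL_n(C): every invertible n×n matrix over L is a product g = h·k where h is the image of an invertible matrix over Localization.Away a (under the map Localization.Away a → L induced by V → C) and k is the image of an invertible matrix over C (under the localization map C → L). (This is the product formula G(Frac V̂ᵃ) = Im(G(V[1/a]))·G(V̂ᵃ) for G = GL_n.) -/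
/-!
Clear denominators: `āᴺ g = G` and `āᴹ g⁻¹ = G'` for matrices `G, G'` over `C`. As `V` is
`ā`-adically dense in `C`, write `G = B + ā^(N+M+1) E` with `B` over `V`. Then `h := a⁻ᴺ B`
over `V[1/a]` maps to `g - ā^(M+1) E = g (1 - ā G' E)`. The matrix `k := 1 - ā G' E` is
invertible over `C` since `ā` lies in the Jacobson radical of the `ā`-adically complete ring `C`,
so the image of `h` is invertible. For a valuation ring `V` the map `V[1/a] → C[1/ā]` reflects
units: an element of `V` divisible by every power of `a` vanishes in `C`, and any other element
divides a power of `a`. Hence `h` is invertible and `g = h k⁻¹`.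
-/

section Matrix

variable {ι : Type*} [Fintype ι] [DecidableEq ι]

theorem RingHom.mapMatrix_smul {R S : Type*} [CommRing R] [CommRing S] (f : R →+* S) (r : R)
    (A : Matrix ι ι R) : f.mapMatrix (r • A) = f r • f.mapMatrix A :=
  Matrix.map_smul' _ _ _ (map_mul f)

theorem RingHom.isLocalHom_mapMatrix {R S : Type*} [CommRing R] [CommRing S] (f : R →+* S)
    [IsLocalHom f] : IsLocalHom (f.mapMatrix : Matrix ι ι R →+* Matrix ι ι S) where
  map_nonunit A hA := by
    rw [Matrix.isUnit_iff_isUnit_det] at hA ⊢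
    rw [← RingHom.map_det] at hA
    exact hA.of_map

theorem Matrix.isUnit_one_sub_smul_of_mem_jacobson {C : Type*} [CommRing C] {x : C}
    (hx : x ∈ (⊥ : Ideal C).jacobson) (K : Matrix ι ι C) : IsUnit (1 - x • K) := by
  have hdet : (1 - x • K).det - 1 ∈ Ideal.span {x} := by
    have hK : (Ideal.Quotient.mk (Ideal.span {x})).mapMatrix (x • K) = 0 := by
      ext i j
      simp
    rw [← Ideal.Quotient.eq_zero_iff_mem, map_sub, map_one, RingHom.map_det, map_sub, map_one, hK,
      sub_zero, Matrix.det_one, sub_self]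
  have hjac : (1 - x • K).det - 1 ∈ (⊥ : Ideal C).jacobson :=
    (Ideal.span_singleton_le_iff_mem _).mpr hx hdet
  rw [Matrix.isUnit_iff_isUnit_det]
  simpa using Ideal.mem_jacobson_bot.mp hjac 1

theorem IsLocalization.Away.exists_mapMatrix_eq_pow_smul {R S : Type*} [CommRing R]
    [CommRing S] [Algebra R S] (x : R) [IsLocalization.Away x S] (A : Matrix ι ι S) :
    ∃ (N : ℕ) (B : Matrix ι ι R), (algebraMap R S).mapMatrix B = algebraMap R S x ^ N • A := by
  obtain ⟨⟨_, N, rfl⟩, hb⟩ := IsLocalization.exist_integer_multiples_of_finite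
    (Submonoid.powers x) (fun p : ι × ι => A p.1 p.2)
  choose B hB using fun i j => hb (i, j)
  refine ⟨N, Matrix.of B, ?_⟩
  ext i j
  simp [hB i j, Algebra.smul_def]

theorem Matrix.exists_eq_mapMatrix_add_pow_smul {V C : Type*} [CommRing V] [CommRing C]
    [Algebra V C] {x : C} {m : ℕ}
    (hdense : ∀ c : C, ∃ v d, c = algebraMap V C v + x ^ m * d) (A : Matrix ι ι C) :
    ∃ (B : Matrix ι ι V) (E : Matrix ι ι C), A = (algebraMap V C).mapMatrix B + x ^ m • E := by
  choose B E hBE using fun i j => hdense (A i j)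
  exact ⟨Matrix.of B, Matrix.of E, by ext i j; simp [hBE i j]⟩

end Matrix

theorem Localization.awayMap_algebraMap_s13 {R P : Type*} [CommRing R] [CommRing P] (f : R →+* P)
    (a x : R) : awayMap f a (algebraMap R (Away a) x) = algebraMap P (Away (f a)) (f x) :=
  IsLocalization.map_eq _ _

theorem PreValuationRing.isLocalHom_awayMap {V C : Type*} [CommRing V] [PreValuationRing V]
    [CommRing C] (f : V →+* C) (a : V) [Nontrivial (Localization.Away (f a))]
    (hf : ∀ r, (∀ m, a ^ m ∣ r) → f r = 0) : IsLocalHom (Localization.awayMap f a) where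
  map_nonunit x hx := by
    obtain ⟨⟨r, s⟩, hrs⟩ := IsLocalization.surj (Submonoid.powers a) x
    suffices hr : IsUnit (algebraMap V (Localization.Away a) r) from
      isUnit_of_mul_isUnit_left (hrs ▸ hr)
    obtain ⟨m, hm⟩ : ∃ m, ¬ a ^ m ∣ r := by
      by_contra! h
      have hfs := hx.mul ((IsLocalization.map_units _ s).map (Localization.awayMap f a))
      rw [← map_mul, hrs, Localization.awayMap_algebraMap_s13, hf r h, map_zero] at hfs
      exact not_isUnit_zero hfs
    have hra : r ∣ a ^ m := (ValuationRing.dvd_total _ _).resolve_right hm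
    exact isUnit_of_dvd_unit (map_dvd _ hra)
      (by rw [map_pow]; exact (IsLocalization.Away.algebraMap_isUnit a).pow m)

namespace Matrix.GeneralLinearGroup

variable {V C : Type*} [CommRing V] [CommRing C] [Algebra V C] (a : V)
  {ι : Type*} [Fintype ι] [DecidableEq ι]

theorem exists_mapMatrix_eq_mul_one_sub_smul
    (hdense : ∀ (m : ℕ) (c : C), ∃ v d, c = algebraMap V C v + algebraMap V C a ^ m * d)
    (g : GL ι (Localization.Away (algebraMap V C a))) :
    ∃ (h : Matrix ι ι (Localization.Away a)) (K : Matrix ι ι C),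
      (Localization.awayMap (algebraMap V C) a).mapMatrix h =
        g.val * (algebraMap C _).mapMatrix (1 - algebraMap V C a • K) := by
  obtain ⟨N, G, hG⟩ := IsLocalization.Away.exists_mapMatrix_eq_pow_smul (algebraMap V C a) g.val
  obtain ⟨M, G', hG'⟩ :=
    IsLocalization.Away.exists_mapMatrix_eq_pow_smul (algebraMap V C a) (g⁻¹).val
  obtain ⟨B, E, hBE⟩ := exists_eq_mapMatrix_add_pow_smul (hdense (N + M + 1)) G
  set ψ := algebraMap C (Localization.Away (algebraMap V C a))
  set φ := Localization.awayMap (algebraMap V C) a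
  have hB : ψ.mapMatrix ((algebraMap V C).mapMatrix B) =
      ψ (algebraMap V C a) ^ N • (g.val * ψ.mapMatrix (1 - algebraMap V C a • (G' * E))) := by
    have hg : g.val * (g⁻¹).val = 1 := g.mul_inv
    rw [eq_sub_of_add_eq hBE.symm, map_sub, map_sub, map_one, RingHom.mapMatrix_smul,
      RingHom.mapMatrix_smul, map_mul, hG, hG', Matrix.mul_sub, Matrix.mul_one, Matrix.smul_mul,
      Matrix.mul_smul, Matrix.mul_smul, ← Matrix.mul_assoc, hg, Matrix.one_mul, smul_sub,
      smul_smul, smul_smul, map_pow, ← pow_succ, ← pow_add, Nat.add_right_comm]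
  have hφB : φ.mapMatrix ((algebraMap V (Localization.Away a)).mapMatrix B) =
      ψ.mapMatrix ((algebraMap V C).mapMatrix B) := by
    ext i j
    exact Localization.awayMap_algebraMap_s13 _ _ _
  have hinv : φ (IsLocalization.Away.invSelf (S := Localization.Away a) a) ^ N *
      ψ (algebraMap V C a) ^ N = 1 := by
    rw [← mul_pow, ← Localization.awayMap_algebraMap_s13, ← map_mul, mul_comm,
      IsLocalization.Away.mul_invSelf, map_one, one_pow]
  refine ⟨IsLocalization.Away.invSelf (S := Localization.Away a) a ^ N •
    (algebraMap V (Localization.Away a)).mapMatrix B, G' * E, ?_⟩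
  rw [RingHom.mapMatrix_smul, map_pow, hφB, hB, smul_smul, hinv, one_smul]

theorem exists_eq_map_mul_map
    (hdense : ∀ (m : ℕ) (c : C), ∃ v d, c = algebraMap V C v + algebraMap V C a ^ m * d)
    (hjac : algebraMap V C a ∈ (⊥ : Ideal C).jacobson)
    [IsLocalHom (Localization.awayMap (algebraMap V C) a)]
    (g : GL ι (Localization.Away (algebraMap V C a))) :
    ∃ (h : GL ι (Localization.Away a)) (k : GL ι C),
      g = map (Localization.awayMap (algebraMap V C) a) h * map (algebraMap C _) k := by
  obtain ⟨h, K, hhK⟩ := exists_mapMatrix_eq_mul_one_sub_smul a hdense g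
  have hk := Matrix.isUnit_one_sub_smul_of_mem_jacobson hjac K
  have := RingHom.isLocalHom_mapMatrix (ι := ι) (Localization.awayMap (algebraMap V C) a)
  have hh : IsUnit h := IsUnit.of_map _ h (hhK ▸ g.isUnit.mul (hk.map _))
  refine ⟨hh.unit, hk.unit⁻¹, ?_⟩
  rw [map_inv, eq_mul_inv_iff_mul_eq]
  exact Units.ext hhK.symm

end Matrix.GeneralLinearGroup

namespace AdicCompletion

variable {R : Type*} [CommRing R] (a : R)

theorem eval_eq_zero_iff_pow_dvd (m : ℕ) (c : AdicCompletion (Ideal.span {a}) R) :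
    eval _ R m c = 0 ↔ algebraMap R (AdicCompletion (Ideal.span {a}) R) a ^ m ∣ c := by
  rw [← LinearMap.mem_ker, ← pow_smul_top_eq_ker_eval (Submodule.fg_span_singleton a),
    Ideal.span_singleton_pow, Submodule.ideal_span_singleton_smul,
    Submodule.mem_smul_pointwise_iff_exists]
  simp [Algebra.smul_def, Dvd.dvd, eq_comm]

theorem exists_algebraMap_add_pow_mul (m : ℕ) (c : AdicCompletion (Ideal.span {a}) R) :
    ∃ v d, c = algebraMap R _ v + algebraMap R _ a ^ m * d := by
  obtain ⟨v, hv⟩ := Submodule.mkQ_surjective _ (eval _ R m c)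
  obtain ⟨d, hd⟩ := (eval_eq_zero_iff_pow_dvd a m (c - algebraMap R _ v)).mp (by
    rw [map_sub, algebraMap_apply, Algebra.algebraMap_self, RingHom.id_apply, eval_of, hv,
      sub_self])
  exact ⟨v, d, by rw [← hd]; ring⟩

theorem algebraMap_eq_zero_of_forall_pow_dvd {r : R} (h : ∀ m, a ^ m ∣ r) :
    algebraMap R (AdicCompletion (Ideal.span {a}) R) r = 0 := by
  ext m
  have hdvd := map_dvd (algebraMap R (AdicCompletion (Ideal.span {a}) R)) (h m)
  rw [map_pow] at hdvd
  rw [← eval_apply, (eval_eq_zero_iff_pow_dvd a m _).mpr hdvd]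
  rfl

theorem algebraMap_mem_jacobson_bot :
    algebraMap R (AdicCompletion (Ideal.span {a}) R) a ∈ (⊥ : Ideal _).jacobson := by
  have := isAdicComplete_self _ (Submodule.fg_span_singleton a)
  apply IsAdicComplete.le_jacobson_bot ((Ideal.span {a}).map (algebraMap R _))
  rw [Ideal.map_span, Set.image_singleton]
  exact Ideal.mem_span_singleton_self _

end AdicCompletion

theorem stmt13_general (V : Type*) [CommRing V] [IsDomain V] [ValuationRing V]
    (a : V) (n : ℕ)
    (g : GL (Fin n) (Localization.Away
        (algebraMap V (AdicCompletion (Ideal.span {a}) V) a))) :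
    ∃ (h : GL (Fin n) (Localization.Away a))
      (k : GL (Fin n) (AdicCompletion (Ideal.span {a}) V)),
      g = Units.map (RingHom.mapMatrix
            (Localization.awayMap (algebraMap V (AdicCompletion (Ideal.span {a}) V))
              a)).toMonoidHom h *
          Units.map (RingHom.mapMatrix
            (algebraMap (AdicCompletion (Ideal.span {a}) V)
              (Localization.Away
                (algebraMap V (AdicCompletion (Ideal.span {a}) V) a)))).toMonoidHom k := by
  rcases subsingleton_or_nontrivial
    (Localization.Away (algebraMap V (AdicCompletion (Ideal.span {a}) V) a)) with hL | hL
  · exact ⟨1, 1, Units.ext (Subsingleton.elim _ _)⟩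
  · have := PreValuationRing.isLocalHom_awayMap
      (algebraMap V (AdicCompletion (Ideal.span {a}) V)) a
      fun _ => AdicCompletion.algebraMap_eq_zero_of_forall_pow_dvd a
    exact Matrix.GeneralLinearGroup.exists_eq_map_mul_map a
      (AdicCompletion.exists_algebraMap_add_pow_mul a)
      (AdicCompletion.algebraMap_mem_jacobson_bot a) g

/-- Product formula for `GLₙ`: for a valuation ring `V`, a nonzero `a` in the maximal ideal,
the `a`-adic completion `C := AdicCompletion (Ideal.span {a}) V` with `ā` the image of `a`,
and `L := C[1/ā]` (the fraction field of `C`), every element of `GLₙ(L)` is a product of the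
image of an element of `GLₙ(V[1/a])` and the image of an element of `GLₙ(C)`. -/
theorem stmt13 (V : Type*) [CommRing V] [IsDomain V] [ValuationRing V]
    (a : V) (ha : a ≠ 0) (ham : a ∈ IsLocalRing.maximalIdeal V) (n : ℕ)
    (g : GL (Fin n) (Localization.Away
        (algebraMap V (AdicCompletion (Ideal.span {a}) V) a))) :
    ∃ (h : GL (Fin n) (Localization.Away a))
      (k : GL (Fin n) (AdicCompletion (Ideal.span {a}) V)),
      g = Units.map (RingHom.mapMatrix
            (Localization.awayMap (algebraMap V (AdicCompletion (Ideal.span {a}) V))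
              a)).toMonoidHom h *
          Units.map (RingHom.mapMatrix
            (algebraMap (AdicCompletion (Ideal.span {a}) V)
              (Localization.Away
                (algebraMap V (AdicCompletion (Ideal.span {a}) V) a)))).toMonoidHom k :=
  stmt13_general V a n g
end
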